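/- (GSPPM high vs. low effort gap.) Let Θ, X_i, X_j be finitely-valued random variables, X_i^l = f(X_i), and suppose the conditional estimator q(·|x,θ) satisfies D_KL(P[X_j | X_i=x, Θ=θ] ∥ q(·|x,θ)) ≤ ε' for all (x,θ). Then E[log q(X_j | X_i, Θ)] exceeds E[log q(X_j | σ(X_i^l), Θ)] by at least I(X_i; X_j | Θ, X_i^l) − ε', for any strategy σ depending only on X_i^l (with auxiliary randomness independent of everything else). -/
import Mathlib

open Finset

/-- Gibbs' inequality (finite, unnormalized `p`): if `q` is a positive
probability vector and `p ≥ 0`, then `∑ p log q ≤ ∑ p log (p / ∑ p)`. -/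
lemma gibbs_aux {B : Type*} [Fintype B] (p q : B → ℝ)
    (hp : ∀ b, 0 ≤ p b) (hq : ∀ b, 0 < q b) (hq1 : ∑ b, q b = 1) :
    ∑ b, p b * Real.log (q b) ≤ ∑ b, p b * Real.log (p b / ∑ b', p b') := by
  set M := ∑ b', p b' with hM
  have key : ∀ b, p b * Real.log (q b) ≤ p b * Real.log (p b / M) + (q b * M - p b) := by
    intro b
    rcases eq_or_lt_of_le (hp b) with h0 | hpos
    · rw [← h0]
      simp only [zero_mul, sub_zero, zero_add]
      exact mul_nonneg (hq b).le (Finset.sum_nonneg fun b _ => hp b)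
    · have hMpos : 0 < M :=
        lt_of_lt_of_le hpos (Finset.single_le_sum (fun b _ => hp b) (mem_univ b))
      have hx : 0 < q b * M / p b := div_pos (mul_pos (hq b) hMpos) hpos
      have hlog := Real.log_le_sub_one_of_pos hx
      have hsplit : Real.log (q b * M / p b) = Real.log (q b) - Real.log (p b / M) := by
        rw [Real.log_div (ne_of_gt (mul_pos (hq b) hMpos)) (ne_of_gt hpos),
          Real.log_mul (ne_of_gt (hq b)) (ne_of_gt hMpos),
          Real.log_div (ne_of_gt hpos) (ne_of_gt hMpos)]
        ring
      rw [hsplit] at hlog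
      have h3 : p b * (Real.log (q b) - Real.log (p b / M)) ≤ p b * (q b * M / p b - 1) :=
        mul_le_mul_of_nonneg_left hlog (hp b)
      have h4 : p b * (q b * M / p b - 1) = q b * M - p b := by
        field_simp
      nlinarith [h3, h4]
  calc ∑ b, p b * Real.log (q b)
      ≤ ∑ b, (p b * Real.log (p b / M) + (q b * M - p b)) :=
        Finset.sum_le_sum fun b _ => key b
    _ = ∑ b, p b * Real.log (p b / M) + ((∑ b, q b) * M - M) := by
        rw [Finset.sum_add_distrib, Finset.sum_sub_distrib, ← Finset.sum_mul, hM]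
    _ = ∑ b, p b * Real.log (p b / M) := by rw [hq1]; ring

/-- GSPPM high-effort vs. low-effort gap: with `X_i^l = f(X_i)` deterministic
and a synopsis-conditional estimator `q(·|x,θ)` within KL-divergence `ε'` of
`P[X_j | X_i = x, Θ = θ]` for all `(x,θ)`, the expected truthful high-effort
score `E[log q(X_j|X_i,Θ)]` exceeds the expected score of any (randomized)
strategy `σ` depending only on `X_i^l` by at least
`I(X_i; X_j | Θ, X_i^l) − ε'`, where the conditional mutual information is
`H(X_j | Θ, X_i^l) − H(X_j | Θ, X_i)`. -/
theorem gsppm_high_vs_low_effort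
    {T A B C : Type*} [Fintype T] [Fintype A] [Fintype B] [Fintype C]
    [DecidableEq C]
    (P : T → A → B → ℝ) (hP0 : ∀ t a b, 0 ≤ P t a b)
    (hP1 : ∑ t, ∑ a, ∑ b, P t a b = 1)
    (f : A → C)
    (q : A → T → B → ℝ) (hqpos : ∀ a t b, 0 < q a t b)
    (hq1 : ∀ a t, ∑ b, q a t b = 1)
    (σ : C → A → ℝ) (hσ0 : ∀ c s, 0 ≤ σ c s) (hσ1 : ∀ c, ∑ s, σ c s = 1)
    (ε' : ℝ) (hε' : 0 ≤ ε')
    (hKL : ∀ a t, 0 < ∑ b', P t a b' →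
      ∑ b, (P t a b / ∑ b', P t a b') *
        Real.log ((P t a b / ∑ b', P t a b') / q a t b) ≤ ε') :
    (∑ t, ∑ a, ∑ b, P t a b * Real.log (q a t b))
        - (∑ t, ∑ a, ∑ b, P t a b * ∑ s, σ (f a) s * Real.log (q s t b))
      ≥ ((-∑ t, ∑ c, ∑ b,
            (∑ a ∈ univ.filter (fun a => f a = c), P t a b) *
              Real.log ((∑ a ∈ univ.filter (fun a => f a = c), P t a b)
                / ∑ b', ∑ a ∈ univ.filter (fun a => f a = c), P t a b'))
          - (-∑ t, ∑ a, ∑ b, P t a b *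
              Real.log (P t a b / ∑ b', P t a b'))) - ε' := by
  -- High-effort bound per (t,a)
  have high : ∀ t a,
      (∑ b, P t a b * Real.log (P t a b / ∑ b', P t a b')) - (∑ b', P t a b') * ε'
        ≤ ∑ b, P t a b * Real.log (q a t b) := by
    intro t a
    set M := ∑ b', P t a b' with hM
    rcases eq_or_lt_of_le (Finset.sum_nonneg fun b (_ : b ∈ univ) => hP0 t a b) with h0 | hMpos
    · have hz : ∀ b, P t a b = 0 := by
        intro b
        have h1 := Finset.single_le_sum (fun b (_ : b ∈ univ) => hP0 t a b) (mem_univ b)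
        have h2 := hP0 t a b
        rw [← hM] at h1
        nlinarith
      have hMz : M = 0 := h0.symm
      simp [hz, hMz]
    · have hkl := hKL a t hMpos
      have hsplit : ∀ b, (P t a b / M) * Real.log ((P t a b / M) / q a t b)
          = (1 / M) * (P t a b * Real.log (P t a b / M))
            - (1 / M) * (P t a b * Real.log (q a t b)) := by
        intro b
        rcases eq_or_lt_of_le (hP0 t a b) with h0 | hpos
        · simp [← h0]
        · rw [Real.log_div (by positivity) (ne_of_gt (hqpos a t b))]; ring
      rw [Finset.sum_congr rfl (fun b _ => hsplit b), Finset.sum_sub_distrib,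
        ← Finset.mul_sum, ← Finset.mul_sum] at hkl
      have hMne : M ≠ 0 := ne_of_gt hMpos
      have h5 := mul_le_mul_of_nonneg_left hkl (le_of_lt hMpos)
      rw [mul_sub, ← mul_assoc, ← mul_assoc] at h5
      rw [show M * (1 / M) = 1 by field_simp] at h5
      rw [one_mul, one_mul] at h5
      linarith
  have highsum : (∑ t, ∑ a, ∑ b, P t a b * Real.log (P t a b / ∑ b', P t a b')) - ε'
      ≤ ∑ t, ∑ a, ∑ b, P t a b * Real.log (q a t b) := by
    have h := Finset.sum_le_sum (fun t (_ : t ∈ (univ : Finset T)) =>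
      Finset.sum_le_sum (fun a (_ : a ∈ (univ : Finset A)) => high t a))
    have hsum : ∑ t, ∑ a,
        ((∑ b, P t a b * Real.log (P t a b / ∑ b', P t a b')) - (∑ b', P t a b') * ε')
        = (∑ t, ∑ a, ∑ b, P t a b * Real.log (P t a b / ∑ b', P t a b')) - ε' := by
      simp only [Finset.sum_sub_distrib, ← Finset.sum_mul]
      rw [hP1, one_mul]
    rw [hsum] at h
    exact h
  -- Low-effort bound
  have low : (∑ t, ∑ a, ∑ b, P t a b * ∑ s, σ (f a) s * Real.log (q s t b))
      ≤ ∑ t, ∑ c, ∑ b,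
          (∑ a ∈ univ.filter (fun a => f a = c), P t a b) *
            Real.log ((∑ a ∈ univ.filter (fun a => f a = c), P t a b)
              / ∑ b', ∑ a ∈ univ.filter (fun a => f a = c), P t a b') := by
    apply Finset.sum_le_sum
    intro t _
    rw [← Finset.sum_fiberwise univ f
      (fun a => ∑ b, P t a b * ∑ s, σ (f a) s * Real.log (q s t b))]
    apply Finset.sum_le_sum
    intro c _
    set F := univ.filter (fun a => f a = c) with hF
    set Pc : B → ℝ := fun b => ∑ a ∈ F, P t a b with hPc
    have key : ∑ a ∈ F, ∑ b, P t a b * ∑ s, σ (f a) s * Real.log (q s t b)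
        = ∑ s, σ c s * ∑ b, Pc b * Real.log (q s t b) := by
      have h1 : ∀ a ∈ F, ∑ b, P t a b * ∑ s, σ (f a) s * Real.log (q s t b)
          = ∑ s, σ c s * ∑ b, P t a b * Real.log (q s t b) := by
        intro a ha
        rw [hF, mem_filter] at ha
        rw [ha.2]
        simp only [Finset.mul_sum]
        rw [Finset.sum_comm]
        apply Finset.sum_congr rfl
        intro s _
        apply Finset.sum_congr rfl
        intro b _
        ring
      rw [Finset.sum_congr rfl h1, Finset.sum_comm]
      apply Finset.sum_congr rfl
      intro s _
      rw [← Finset.mul_sum]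
      congr 1
      rw [Finset.sum_comm]
      apply Finset.sum_congr rfl
      intro b _
      rw [hPc, Finset.sum_mul]
    rw [key]
    have gibbs : ∀ s, ∑ b, Pc b * Real.log (q s t b)
        ≤ ∑ b, Pc b * Real.log (Pc b / ∑ b', Pc b') := by
      intro s
      exact gibbs_aux Pc (fun b => q s t b)
        (fun b => Finset.sum_nonneg fun a _ => hP0 t a b) (fun b => hqpos s t b) (hq1 s t)
    calc ∑ s, σ c s * ∑ b, Pc b * Real.log (q s t b)
        ≤ ∑ s, σ c s * ∑ b, Pc b * Real.log (Pc b / ∑ b', Pc b') :=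
          Finset.sum_le_sum fun s _ => mul_le_mul_of_nonneg_left (gibbs s) (hσ0 c s)
      _ = ∑ b, Pc b * Real.log (Pc b / ∑ b', Pc b') := by
          rw [← Finset.sum_mul, hσ1, one_mul]
  linarith
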